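/- arXiv:2510.04555 — 2 statements merged into one kernel-verified Lean document; each statement's English description precedes it below -/
import Mathlib

section
/- Let S and A be finite sets, let P : S × A → (S → ℝ) be a stochastic kernel (P(x,a) is a nonnegative function on S summing to 1), and let π, π' : S → (A → ℝ) be two policies (π(x), π'(x) nonnegative, summing to 1 over A). Suppose for every x ∈ S, Σ_a |π'(x)(a) − π(x)(a)| ≤ 2ε. Let p_0 = p_0' be a common initial distribution on S and define the state marginals recursively by p_{t+1}(x') = Σ_{x,a} p_t(x)·π(x)(a)·P(x,a)(x') and analogously p'_{t+1} using π'. Then for every t, Σ_x |p'_t(x) − p_t(x)| ≤ 2·t·ε, and consequently the undiscounted occupancy measures d = (1/T)·Σ_{t=0}^{T−1} p_t and d' = (1/T)·Σ_{t=0}^{T−1} p'_t satisfy Σ_x |d'(x) − d(x)| ≤ (T−1)·ε. -/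
open Finset

/-- **Occupancy shift under a per-state ℓ1 bound on policy deviation.**
Finite state/action spaces, stochastic kernel `P`, policies `π, π'` with
`∑_a |π'(x)(a) - π(x)(a)| ≤ 2ε` for every state `x`, common initial distribution
`p₀`, and state marginals defined by the given recursions. Then
`∑_x |p'_t(x) - p_t(x)| ≤ 2 t ε` for every `t`, and the undiscounted occupancy
measures `d = (1/T) ∑_{t<T} p_t`, `d' = (1/T) ∑_{t<T} p'_t` satisfy
`∑_x |d'(x) - d(x)| ≤ (T-1) ε`. -/
theorem stmt8 {S A : Type*} [Fintype S] [Fintype A] [Nonempty S] [Nonempty A]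
    (P : S → A → S → ℝ)
    (hPnn : ∀ x a x', 0 ≤ P x a x') (hPsum : ∀ x a, ∑ x', P x a x' = 1)
    (pol pol' : S → A → ℝ)
    (hπnn : ∀ x a, 0 ≤ pol x a) (hπsum : ∀ x, ∑ a, pol x a = 1)
    (hπ'nn : ∀ x a, 0 ≤ pol' x a) (hπ'sum : ∀ x, ∑ a, pol' x a = 1)
    (ε : ℝ) (hTV : ∀ x, ∑ a, |pol' x a - pol x a| ≤ 2 * ε)
    (p0 : S → ℝ) (hp0nn : ∀ x, 0 ≤ p0 x) (hp0sum : ∑ x, p0 x = 1)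
    (p p' : ℕ → S → ℝ)
    (hpinit : p 0 = p0) (hp'init : p' 0 = p0)
    (hrec : ∀ t x', p (t + 1) x' = ∑ x, ∑ a, p t x * pol x a * P x a x')
    (hrec' : ∀ t x', p' (t + 1) x' = ∑ x, ∑ a, p' t x * pol' x a * P x a x')
    (T : ℕ) (hT : 0 < T) :
    (∀ t : ℕ, ∑ x, |p' t x - p t x| ≤ 2 * t * ε) ∧
    ∑ x, |(1 / (T : ℝ)) * (∑ t ∈ Finset.range T, p' t x) -
        (1 / (T : ℝ)) * ∑ t ∈ Finset.range T, p t x| ≤ ((T : ℝ) - 1) * ε := by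
  have hε : 0 ≤ ε := by
    have h := hTV (Classical.arbitrary S)
    have h0 : (0:ℝ) ≤ ∑ a, |pol' (Classical.arbitrary S) a - pol (Classical.arbitrary S) a| :=
      Finset.sum_nonneg fun a _ => abs_nonneg _
    linarith
  -- p t is a probability distribution
  have hpt : ∀ t, (∀ x, 0 ≤ p t x) ∧ ∑ x, p t x = 1 := by
    intro t
    induction t with
    | zero => rw [hpinit]; exact ⟨hp0nn, hp0sum⟩
    | succ t ih =>
      constructor
      · intro x'
        rw [hrec]
        exact Finset.sum_nonneg fun x _ => Finset.sum_nonneg fun a _ =>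
          mul_nonneg (mul_nonneg (ih.1 x) (hπnn x a)) (hPnn x a x')
      · calc ∑ x', p (t+1) x' = ∑ x', ∑ x, ∑ a, p t x * pol x a * P x a x' := by
              simp only [hrec]
          _ = ∑ x, ∑ a, ∑ x', p t x * pol x a * P x a x' := by
              rw [Finset.sum_comm]; congr 1; ext x; rw [Finset.sum_comm]
          _ = ∑ x, ∑ a, p t x * pol x a := by
              congr 1; ext x; congr 1; ext a
              rw [← Finset.mul_sum, hPsum, mul_one]
          _ = ∑ x, p t x := by
              congr 1; ext x; rw [← Finset.mul_sum, hπsum, mul_one]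
          _ = 1 := ih.2
  have hmain : ∀ t : ℕ, ∑ x, |p' t x - p t x| ≤ 2 * t * ε := by
    intro t
    induction t with
    | zero => simp [hpinit, hp'init]
    | succ t ih =>
      have key : ∑ x', |p' (t+1) x' - p (t+1) x'|
          ≤ ∑ x, ∑ a, |p' t x * pol' x a - p t x * pol x a| := by
        calc ∑ x', |p' (t+1) x' - p (t+1) x'|
            = ∑ x', |∑ x, ∑ a, (p' t x * pol' x a - p t x * pol x a) * P x a x'| := by
              congr 1; ext x'
              rw [hrec, hrec']
              congr 1
              rw [← Finset.sum_sub_distrib]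
              congr 1; ext x
              rw [← Finset.sum_sub_distrib]
              congr 1; ext a; ring
          _ ≤ ∑ x', ∑ x, ∑ a, |p' t x * pol' x a - p t x * pol x a| * P x a x' := by
              apply Finset.sum_le_sum; intro x' _
              refine (Finset.abs_sum_le_sum_abs _ _).trans ?_
              apply Finset.sum_le_sum; intro x _
              refine (Finset.abs_sum_le_sum_abs _ _).trans ?_
              apply Finset.sum_le_sum; intro a _
              rw [abs_mul, abs_of_nonneg (hPnn x a x')]
          _ = ∑ x, ∑ a, ∑ x', |p' t x * pol' x a - p t x * pol x a| * P x a x' := by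
              rw [Finset.sum_comm]; congr 1; ext x; rw [Finset.sum_comm]
          _ = ∑ x, ∑ a, |p' t x * pol' x a - p t x * pol x a| := by
              congr 1; ext x; congr 1; ext a
              rw [← Finset.mul_sum, hPsum, mul_one]
      have bound : ∑ x, ∑ a, |p' t x * pol' x a - p t x * pol x a|
          ≤ 2 * t * ε + 2 * ε := by
        have step : ∀ x : S, ∑ a, |p' t x * pol' x a - p t x * pol x a|
            ≤ |p' t x - p t x| + p t x * (2 * ε) := by
          intro x
          calc ∑ a, |p' t x * pol' x a - p t x * pol x a|
              ≤ ∑ a, (|p' t x - p t x| * pol' x a + p t x * |pol' x a - pol x a|) := by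
                apply Finset.sum_le_sum; intro a _
                have : p' t x * pol' x a - p t x * pol x a
                    = (p' t x - p t x) * pol' x a + p t x * (pol' x a - pol x a) := by ring
                rw [this]
                refine (abs_add_le _ _).trans ?_
                rw [abs_mul, abs_mul, abs_of_nonneg (hπ'nn x a),
                  abs_of_nonneg ((hpt t).1 x)]
            _ = |p' t x - p t x| + p t x * ∑ a, |pol' x a - pol x a| := by
                rw [Finset.sum_add_distrib, ← Finset.mul_sum, ← Finset.mul_sum,
                  hπ'sum, mul_one]
            _ ≤ |p' t x - p t x| + p t x * (2 * ε) := by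
                have := mul_le_mul_of_nonneg_left (hTV x) ((hpt t).1 x)
                linarith
        calc ∑ x, ∑ a, |p' t x * pol' x a - p t x * pol x a|
            ≤ ∑ x, (|p' t x - p t x| + p t x * (2 * ε)) :=
              Finset.sum_le_sum fun x _ => step x
          _ = (∑ x, |p' t x - p t x|) + (∑ x, p t x) * (2 * ε) := by
              rw [Finset.sum_add_distrib, Finset.sum_mul]
          _ ≤ 2 * t * ε + 2 * ε := by rw [(hpt t).2]; linarith
      have : (2 : ℝ) * (t + 1 : ℕ) * ε = 2 * t * ε + 2 * ε := by push_cast; ring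
      rw [this]
      exact key.trans bound
  refine ⟨hmain, ?_⟩
  have hTpos : (0:ℝ) < T := by exact_mod_cast hT
  calc ∑ x, |(1 / (T : ℝ)) * (∑ t ∈ Finset.range T, p' t x) -
        (1 / (T : ℝ)) * ∑ t ∈ Finset.range T, p t x|
      = ∑ x, (1 / (T : ℝ)) * |∑ t ∈ Finset.range T, (p' t x - p t x)| := by
        congr 1; ext x
        rw [← mul_sub, abs_mul, abs_of_nonneg (by positivity : (0:ℝ) ≤ 1 / (T:ℝ)),
          Finset.sum_sub_distrib]
    _ ≤ ∑ x, (1 / (T : ℝ)) * ∑ t ∈ Finset.range T, |p' t x - p t x| := by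
        apply Finset.sum_le_sum; intro x _
        exact mul_le_mul_of_nonneg_left (Finset.abs_sum_le_sum_abs _ _) (by positivity)
    _ = (1 / (T : ℝ)) * ∑ t ∈ Finset.range T, ∑ x, |p' t x - p t x| := by
        rw [← Finset.mul_sum, Finset.sum_comm]
    _ ≤ (1 / (T : ℝ)) * ∑ t ∈ Finset.range T, 2 * (t:ℝ) * ε := by
        apply mul_le_mul_of_nonneg_left _ (by positivity)
        exact Finset.sum_le_sum fun t _ => hmain t
    _ = (1 / (T : ℝ)) * ((T:ℝ) * ((T:ℝ) - 1) * ε) := by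
        congr 1
        have : ∑ t ∈ Finset.range T, 2 * (t:ℝ) * ε
            = 2 * ε * ∑ t ∈ Finset.range T, (t:ℝ) := by
          rw [Finset.mul_sum]; congr 1; ext t; ring
        rw [this, ← Nat.cast_sum]
        have h2 : (∑ i ∈ Finset.range T, i) * 2 = T * (T - 1) :=
          Finset.sum_range_id_mul_two T
        have h3 : ((∑ i ∈ Finset.range T, i : ℕ) : ℝ) * 2 = (T:ℝ) * ((T:ℝ) - 1) := by
          have := congrArg (Nat.cast : ℕ → ℝ) h2
          push_cast [Nat.cast_sub hT] at this ⊢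
          linarith
        linear_combination ε * h3
    _ = ((T : ℝ) - 1) * ε := by field_simp
end

section
/- Let q : [0,1] → ℝ be integrable with |q(u)| ≤ B for all u, let p : [0,1] → ℝ be a nonnegative integrable probability density with ∫₀¹ p(τ) dτ = 1, let α ∈ [0,1], and set α_eff = ∫₀^α p(τ) dτ. Suppose α, α_eff ∈ [α_min, 1] with α_min > 0. Then | (1/α_eff)·∫₀^{α_eff} q(u) du − (1/α)·∫₀^α q(u) du | ≤ (2B/α_min)·(1/2)·∫₀¹ |p(τ) − 1| dτ, i.e., the coverage-mismatch error between the CVaR at the effective tail level α_eff and the CVaR at the target level α is bounded by a constant times the total variation distance between the sampling density p and the uniform density on [0,1]. -/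
open MeasureTheory intervalIntegral

/-- **Coverage-mismatch bound for CVaR.**
Let `q : [0,1] → ℝ` be integrable with `|q| ≤ B` on `[0,1]`, `p` a nonnegative
integrable probability density on `[0,1]` with `∫₀¹ p = 1`, `α ∈ [0,1]`, and
`α_eff = ∫₀^α p`. If `α, α_eff ∈ [α_min, 1]` with `α_min > 0`, then
`|(1/α_eff) ∫₀^{α_eff} q - (1/α) ∫₀^α q| ≤ (2B/α_min) · (1/2) ∫₀¹ |p - 1|`,
i.e. the CVaR coverage-mismatch error is bounded by a constant times the total
variation distance between the sampling density `p` and the uniform density. -/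
theorem stmt19 (q p : ℝ → ℝ)
    (hqInt : IntervalIntegrable q volume 0 1)
    (B : ℝ) (hqB : ∀ u ∈ Set.Icc (0 : ℝ) 1, |q u| ≤ B)
    (hpInt : IntervalIntegrable p volume 0 1)
    (hpnn : ∀ τ ∈ Set.Icc (0 : ℝ) 1, 0 ≤ p τ)
    (hpd : ∫ τ in (0 : ℝ)..1, p τ = 1)
    (α αmin : ℝ) (hα : α ∈ Set.Icc (0 : ℝ) 1)
    (αeff : ℝ) (hαeff : αeff = ∫ τ in (0 : ℝ)..α, p τ)
    (hαmin : 0 < αmin)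
    (hαin : α ∈ Set.Icc αmin 1) (hαeffin : αeff ∈ Set.Icc αmin 1) :
    |(1 / αeff) * (∫ u in (0 : ℝ)..αeff, q u) - (1 / α) * ∫ u in (0 : ℝ)..α, q u| ≤
      (2 * B / αmin) * ((1 / 2) * ∫ τ in (0 : ℝ)..1, |p τ - 1|) := by
  obtain ⟨hα0, hα1⟩ := hα
  obtain ⟨hαm, _⟩ := hαin
  obtain ⟨hem, he1⟩ := hαeffin
  have hB0 : 0 ≤ B := le_trans (abs_nonneg _) (hqB 0 ⟨le_refl 0, zero_le_one⟩)
  have hαpos : 0 < α := lt_of_lt_of_le hαmin hαm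
  have hepos : 0 < αeff := lt_of_lt_of_le hαmin hem
  have he0 : 0 ≤ αeff := hepos.le
  -- integrability
  have hsub : Set.uIcc (0:ℝ) α ⊆ Set.uIcc (0:ℝ) 1 := by
    rw [Set.uIcc_of_le hα0, Set.uIcc_of_le zero_le_one]
    exact Set.Icc_subset_Icc le_rfl hα1
  have hsub' : Set.uIcc α (1:ℝ) ⊆ Set.uIcc (0:ℝ) 1 := by
    rw [Set.uIcc_of_le hα1, Set.uIcc_of_le zero_le_one]
    exact Set.Icc_subset_Icc hα0 le_rfl
  have hg : IntervalIntegrable (fun τ => p τ - 1) volume 0 1 :=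
    hpInt.sub intervalIntegrable_const
  have hgabs : IntervalIntegrable (fun τ => |p τ - 1|) volume 0 1 := hg.abs
  set D := (1/2) * ∫ τ in (0:ℝ)..1, |p τ - 1| with hD
  have habsnn : 0 ≤ ∫ τ in (0:ℝ)..1, |p τ - 1| :=
    intervalIntegral.integral_nonneg zero_le_one (fun x _ => abs_nonneg _)
  have hDnn : 0 ≤ D := by positivity
  -- g integral over [0,1] is zero
  have hgzero : (∫ τ in (0:ℝ)..1, (p τ - 1)) = 0 := by
    rw [intervalIntegral.integral_sub hpInt intervalIntegrable_const, hpd]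
    simp
  -- step 1: |αeff - α| ≤ D
  have hde : αeff - α = ∫ τ in (0:ℝ)..α, (p τ - 1) := by
    rw [intervalIntegral.integral_sub (hpInt.mono_set hsub) intervalIntegrable_const,
      ← hαeff]
    simp
  have hdiff : |αeff - α| ≤ D := by
    rw [abs_le, hde]
    have hplus : IntervalIntegrable (fun τ => (p τ - 1 + |p τ - 1|)/2) volume 0 1 :=
      (hg.add hgabs).div_const 2
    have hminus : IntervalIntegrable (fun τ => (p τ - 1 - |p τ - 1|)/2) volume 0 1 :=
      (hg.sub hgabs).div_const 2
    have hplusval : (∫ τ in (0:ℝ)..1, (p τ - 1 + |p τ - 1|)/2) = D := by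
      rw [intervalIntegral.integral_div, intervalIntegral.integral_add hg hgabs, hgzero]
      rw [hD]; ring
    have hminusval : (∫ τ in (0:ℝ)..1, (p τ - 1 - |p τ - 1|)/2) = -D := by
      rw [intervalIntegral.integral_div, intervalIntegral.integral_sub hg hgabs, hgzero]
      rw [hD]; ring
    constructor
    · -- -D ≤ ∫₀^α g
      rw [← hminusval]
      have h1 : (∫ τ in (0:ℝ)..1, (p τ - 1 - |p τ - 1|)/2)
          ≤ ∫ τ in (0:ℝ)..α, (p τ - 1 - |p τ - 1|)/2 := by
        rw [← intervalIntegral.integral_add_adjacent_intervals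
          (hminus.mono_set hsub) (hminus.mono_set hsub')]
        have : (∫ τ in α..1, (p τ - 1 - |p τ - 1|)/2) ≤ 0 := by
          have h0 : (∫ τ in α..1, (p τ - 1 - |p τ - 1|)/2) ≤ ∫ τ in α..1, (0:ℝ) := by
            apply intervalIntegral.integral_mono_on hα1
              (hminus.mono_set hsub') intervalIntegrable_const
            intro x _
            have := le_abs_self (p x - 1)
            linarith
          simpa using h0
        linarith
      refine h1.trans ?_
      apply intervalIntegral.integral_mono_on hα0
        (hminus.mono_set hsub) (hg.mono_set hsub)
      intro x _
      have := neg_abs_le (p x - 1)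
      linarith
    · -- ∫₀^α g ≤ D
      rw [← hplusval]
      have h1 : (∫ τ in (0:ℝ)..α, (p τ - 1))
          ≤ ∫ τ in (0:ℝ)..α, (p τ - 1 + |p τ - 1|)/2 := by
        apply intervalIntegral.integral_mono_on hα0
          (hg.mono_set hsub) (hplus.mono_set hsub)
        intro x _
        have := le_abs_self (p x - 1)
        linarith
      refine h1.trans ?_
      rw [← intervalIntegral.integral_add_adjacent_intervals
        (hplus.mono_set hsub) (hplus.mono_set hsub')]
      have : 0 ≤ ∫ τ in α..1, (p τ - 1 + |p τ - 1|)/2 := by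
        apply intervalIntegral.integral_nonneg hα1
        intro x _
        have := neg_abs_le (p x - 1)
        linarith
      linarith
  -- step 2: Lipschitz bounds on F
  set Fa := ∫ u in (0:ℝ)..α, q u with hFa
  set Fb := ∫ u in (0:ℝ)..αeff, q u with hFb
  have hsube : Set.uIcc (0:ℝ) αeff ⊆ Set.uIcc (0:ℝ) 1 := by
    rw [Set.uIcc_of_le he0, Set.uIcc_of_le zero_le_one]
    exact Set.Icc_subset_Icc le_rfl he1
  have hsubae : Set.uIcc α αeff ⊆ Set.uIcc (0:ℝ) 1 := by
    rw [Set.uIcc_of_le zero_le_one]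
    exact Set.uIcc_subset_Icc ⟨hα0, hα1⟩ ⟨he0, he1⟩
  have hFdiff : |Fb - Fa| ≤ B * |αeff - α| := by
    have : Fb - Fa = ∫ u in α..αeff, q u := by
      rw [hFa, hFb, ← intervalIntegral.integral_add_adjacent_intervals
        (hqInt.mono_set hsub) (hqInt.mono_set hsubae)]
      ring
    rw [this]
    have := intervalIntegral.norm_integral_le_of_norm_le_const (C := B)
      (f := q) (a := α) (b := αeff) ?_
    · simpa using this
    · intro x hx
      have hx' : x ∈ Set.Icc (0:ℝ) 1 := by
        rw [Set.uIcc_of_le zero_le_one] at hsubae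
        exact hsubae (Set.uIoc_subset_uIcc hx)
      simpa using hqB x hx'
  have hFaB : |Fa| ≤ B * α := by
    have := intervalIntegral.norm_integral_le_of_norm_le_const (C := B)
      (f := q) (a := (0:ℝ)) (b := α) ?_
    · rw [sub_zero, abs_of_nonneg hα0] at this; simpa using this
    · intro x hx
      have hx' : x ∈ Set.Icc (0:ℝ) 1 := by
        have := hsub (Set.uIoc_subset_uIcc hx)
        rwa [Set.uIcc_of_le zero_le_one] at this
      simpa using hqB x hx'
  -- algebra
  have key : 1/αeff * Fb - 1/α * Fa = (Fb - Fa)/αeff + Fa*(α - αeff)/(α*αeff) := by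
    field_simp
    ring
  have hC : 0 ≤ B * |αeff - α| := mul_nonneg hB0 (abs_nonneg _)
  have h1 : |(Fb - Fa)/αeff| ≤ B * |αeff - α| / αmin := by
    rw [abs_div, abs_of_pos hepos]
    exact div_le_div₀ hC hFdiff hαmin hem
  have h2 : |Fa*(α - αeff)/(α*αeff)| ≤ B * |αeff - α| / αmin := by
    rw [abs_div, abs_mul, abs_of_pos (mul_pos hαpos hepos), abs_sub_comm α αeff]
    have e1 : B*α*|αeff - α|/(α*αeff) = B*|αeff - α|/αeff := by
      field_simp
    calc |Fa| * |αeff - α| / (α*αeff)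
        ≤ B*α * |αeff - α| / (α*αeff) := by
          gcongr
      _ = B*|αeff - α|/αeff := e1
      _ ≤ B * |αeff - α| / αmin := div_le_div₀ hC le_rfl hαmin hem
  calc |1/αeff * Fb - 1/α * Fa|
      = |(Fb - Fa)/αeff + Fa*(α - αeff)/(α*αeff)| := by rw [key]
    _ ≤ |(Fb - Fa)/αeff| + |Fa*(α - αeff)/(α*αeff)| := abs_add_le _ _
    _ ≤ B * |αeff - α| / αmin + B * |αeff - α| / αmin := add_le_add h1 h2
    _ = (2 * B / αmin) * |αeff - α| := by ring
    _ ≤ (2 * B / αmin) * D := by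
        apply mul_le_mul_of_nonneg_left hdiff
        positivity
end
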